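/- arXiv:2102.11857 — 5 statements merged into one kernel-verified Lean document; each statement's English description precedes it below -/
import Mathlib

section
/- Let X be a normal symmetric subset of a group G such that |x^G| ≤ n for every x ∈ X, and let H = ⟨X⟩. Then for each x ∈ X, the normal closure ⟨[H,x]^G⟩ of [H,x] in G is finite of n-bounded order. -/
/-!
Put `y = x⁻¹` and `T = ⟨y^G⟩`. The group `T` is generated by at most `n` elements whose
centralizers have index at most `n`, so its centre has index at most `n ^ n` and, by Schur's
theorem, `T'` has bounded order. Every conjugate of a generator `[h, x]` of `[H, x]` is a
commutator `⁅k, z⁆` with `k ∈ H` and `z ∈ y^G`; there are at most `n²` of these, they commute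
modulo `T'`, and their images in `T / T'` have bounded order: for `k ∈ X` because `⟨k, z⟩` has a
centre of index at most `n²` (Schur again), and in general because `k ↦ ⁅k, z⁆` is a crossed
homomorphism into the abelian group `T / T'`. So `⟨[H, x]^G⟩` has bounded image in `G / T'` and
meets `T'` in a bounded subgroup.
-/

/-- The conjugacy class of `x` in `G`. -/
def conjClass {G : Type*} [Group G] (x : G) : Set G := {y | ∃ g : G, y = g⁻¹ * x * g}

/-- The subgroup `[H, x]` generated by the commutators `[h, x]` with `h ∈ H`. -/
def commSub {G : Type*} [Group G] (H : Subgroup G) (x : G) : Subgroup G :=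
  Subgroup.closure {z | ∃ h ∈ H, z = h⁻¹ * x⁻¹ * h * x}

open Subgroup
open scoped commutatorElement IsMulCommutative

section ConjClass

variable {G : Type*} [Group G]

lemma mem_conjClass_iff {x y : G} : y ∈ conjClass x ↔ IsConj x y := by
  rw [isConj_iff]
  constructor
  · rintro ⟨g, rfl⟩
    exact ⟨g⁻¹, by group⟩
  · rintro ⟨c, rfl⟩
    exact ⟨c⁻¹, by group⟩

lemma conjClass_eq_conjugatesOf (x : G) : conjClass x = conjugatesOf x :=
  Set.ext fun _ => mem_conjClass_iff

lemma conjClass_eq_of_mem {x y : G} (h : y ∈ conjClass x) : conjClass y = conjClass x := by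
  rw [conjClass_eq_conjugatesOf, conjClass_eq_conjugatesOf,
    (mem_conjClass_iff.mp h).conjugatesOf_eq]

lemma closure_conjClass (x : G) : closure (conjClass x) = normalClosure {x} := by
  simp [normalClosure, Group.conjugatesOfSet, conjClass_eq_conjugatesOf]

lemma index_centralizer_eq_ncard_conjClass (x : G) :
    (centralizer {x}).index = (conjClass x).ncard := by
  have horbit : MulAction.orbit (ConjAct G) x = conjClass x := by
    ext y
    rw [ConjAct.mem_orbit_conjAct, isConj_comm, mem_conjClass_iff]
  rw [← horbit, ← MulAction.index_stabilizer, ConjAct.stabilizer_eq_centralizer]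
  rfl

lemma index_centralizer_ne_zero {x : G} (hx : (conjClass x).Finite) :
    (centralizer {x}).index ≠ 0 := by
  rw [index_centralizer_eq_ncard_conjClass]
  exact ((Set.ncard_pos hx).mpr ⟨x, mem_conjClass_iff.mpr (IsConj.refl x)⟩).ne'

lemma closure_normal_of_conj_mem {X : Set G} (hX : ∀ g : G, ∀ x ∈ X, g⁻¹ * x * g ∈ X) :
    (closure X).Normal := by
  suffices closure X = normalClosure X from this ▸ inferInstance
  refine le_antisymm closure_le_normalClosure (closure_mono fun y hy => ?_)
  obtain ⟨a, ha, hay⟩ := Group.mem_conjugatesOfSet_iff.mp hy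
  obtain ⟨c, rfl⟩ := isConj_iff.mp hay
  simpa using hX c⁻¹ a ha

end ConjClass

section Schur

variable {G : Type*} [Group G]

lemma commutatorElement_mul_mem_center_left {z : G} (hz : z ∈ center G) (a b : G) :
    ⁅a * z, b⁆ = ⁅a, b⁆ := by
  rw [commutatorElement_def, commutatorElement_def, mul_assoc a z b, ← mem_center_iff.mp hz b]
  group

lemma commutatorElement_mul_mem_center_right {z : G} (hz : z ∈ center G) (a b : G) :
    ⁅a, b * z⁆ = ⁅a, b⁆ := by
  rw [← commutatorElement_inv, commutatorElement_mul_mem_center_left hz, commutatorElement_inv]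

lemma commutatorSet_subset_range_out :
    commutatorSet G ⊆ Set.range fun p : (G ⧸ center G) × (G ⧸ center G) ↦ ⁅p.1.out, p.2.out⁆ := by
  rintro _ ⟨a, b, rfl⟩
  obtain ⟨z, hz⟩ := QuotientGroup.mk_out_eq_mul (center G) a
  obtain ⟨w, hw⟩ := QuotientGroup.mk_out_eq_mul (center G) b
  refine ⟨((a : G ⧸ center G), (b : G ⧸ center G)), ?_⟩
  simp only [hz, hw, commutatorElement_mul_mem_center_left z.2,
    commutatorElement_mul_mem_center_right w.2]

instance finite_commutatorSet_of_finiteIndex_center [(center G).FiniteIndex] :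
    Finite (commutatorSet G) :=
  Set.Finite.subset (Set.finite_range _) commutatorSet_subset_range_out

lemma card_commutatorSet_le_index_center_sq [(center G).FiniteIndex] :
    Nat.card (commutatorSet G) ≤ (center G).index ^ 2 := by
  calc Nat.card (commutatorSet G)
      ≤ Nat.card ((G ⧸ center G) × (G ⧸ center G)) :=
        (Nat.card_mono (Set.finite_range _) commutatorSet_subset_range_out).trans
          (Finite.card_range_le _)
    _ = (center G).index ^ 2 := by rw [Nat.card_prod, ← index_eq_card, sq]

-- The bound of `card_commutator_dvd_index_center_pow`, with at most `[G : Z(G)] ^ 2` commutators.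
def schurBound (m : ℕ) : ℕ := m ^ (m * m ^ 2 + 1)

theorem card_commutator_le_schurBound [(center G).FiniteIndex] {m : ℕ}
    (hm : (center G).index ≤ m) : Nat.card (commutator G) ≤ schurBound m := by
  have hpos : 0 < (center G).index := Nat.pos_of_ne_zero FiniteIndex.index_ne_zero
  calc Nat.card (commutator G)
      ≤ (center G).index ^ ((center G).index * Nat.card (commutatorSet G) + 1) :=
        Nat.le_of_dvd (by positivity) (card_commutator_dvd_index_center_pow G)
    _ ≤ (center G).index ^ ((center G).index * (center G).index ^ 2 + 1) := by
        gcongr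
        exact card_commutatorSet_le_index_center_sq
    _ ≤ schurBound m := by
        unfold schurBound
        gcongr
        omega

end Schur

section Centralizer

variable {G : Type*} [Group G]

lemma index_centralizer_le_pow {s : Set G} (hs : s.Finite) {n : ℕ}
    (hn : ∀ y ∈ s, (centralizer {y}).index ≤ n) :
    (centralizer s).index ≤ n ^ s.ncard := by
  have := hs.fintype
  rw [centralizer_eq_iInf, ← iInf_subtype'']
  calc (⨅ y : s, centralizer {(y : G)}).index
      ≤ ∏ y : s, (centralizer {(y : G)}).index := index_iInf_le _
    _ ≤ n ^ s.ncard := by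
        rw [← Nat.card_coe_set_eq, Nat.card_eq_fintype_card, ← Finset.card_univ]
        exact Finset.prod_le_pow_card _ _ _ fun y _ => hn y y.2

lemma finiteIndex_centralizer {s : Set G} (hs : s.Finite)
    (h0 : ∀ y ∈ s, (centralizer {y}).index ≠ 0) : (centralizer s).FiniteIndex := by
  have := hs.to_subtype
  rw [centralizer_eq_iInf, ← iInf_subtype'']
  exact ⟨index_iInf_ne_zero fun y => h0 y y.2⟩

lemma subgroupOf_centralizer_le_center (s : Set G) :
    (centralizer s).subgroupOf (closure s) ≤ center (closure s) := by
  intro c hc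
  rw [mem_subgroupOf, ← centralizer_closure] at hc
  exact mem_center_iff.mpr fun t => Subtype.ext (mem_centralizer_iff.mp hc t t.2)

instance finiteIndex_center_closure (s : Set G) [(centralizer s).FiniteIndex] :
    (center (closure s)).FiniteIndex :=
  finiteIndex_of_le (subgroupOf_centralizer_le_center s)

lemma index_center_closure_le (s : Set G) [(centralizer s).FiniteIndex] :
    (center (closure s)).index ≤ (centralizer s).index := by
  calc (center (closure s)).index
      ≤ ((centralizer s).subgroupOf (closure s)).index :=
        index_antitone (subgroupOf_centralizer_le_center s)
    _ ≤ (centralizer s).index := by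
        have h := relIndex_le_of_le_right (H := centralizer s) (le_top : closure s ≤ ⊤)
          (by rw [relIndex_top_right]; exact FiniteIndex.index_ne_zero)
        rwa [relIndex_top_right] at h

theorem card_commutator_closure_le {s : Set G} (hs : s.Finite) (hs0 : s.Nonempty) {n k : ℕ}
    (hn : ∀ y ∈ s, (conjClass y).Finite ∧ (conjClass y).ncard ≤ n) (hk : s.ncard ≤ k) :
    Finite (commutator (closure s)) ∧ Nat.card (commutator (closure s)) ≤ schurBound (n ^ k) := by
  have hind : ∀ y ∈ s, (centralizer {y}).index ≤ n := fun y hy => by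
    rw [index_centralizer_eq_ncard_conjClass]; exact (hn y hy).2
  have := finiteIndex_centralizer hs fun y hy => index_centralizer_ne_zero (hn y hy).1
  obtain ⟨y, hy⟩ := hs0
  have hn1 : 1 ≤ n := (Nat.one_le_iff_ne_zero.mpr (index_centralizer_ne_zero (hn y hy).1)).trans
    (hind y hy)
  refine ⟨inferInstance, card_commutator_le_schurBound ?_⟩
  calc (center (closure s)).index
      ≤ (centralizer s).index := index_center_closure_le s
    _ ≤ n ^ s.ncard := index_centralizer_le_pow hs hind
    _ ≤ n ^ k := Nat.pow_le_pow_right hn1 hk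

end Centralizer

section Commutators

variable {G : Type*} [Group G]

lemma commutatorElement_pow_factorial_eq_one {y z : G} {n : ℕ}
    (hy : (conjClass y).Finite ∧ (conjClass y).ncard ≤ n)
    (hz : (conjClass z).Finite ∧ (conjClass z).ncard ≤ n) :
    ⁅y, z⁆ ^ (schurBound (n ^ 2)).factorial = 1 := by
  set s : Set G := {y, z}
  obtain ⟨_, hcard⟩ := card_commutator_closure_le (Set.toFinite s) (Set.insert_nonempty y {z})
    (by rintro w (rfl | rfl) <;> assumption)
    ((Set.ncard_insert_le y {z}).trans (by rw [Set.ncard_singleton]))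
  let c : commutator (closure s) :=
    ⟨⁅⟨y, subset_closure (by simp [s])⟩, ⟨z, subset_closure (by simp [s])⟩⁆,
      commutator_mem_commutator (mem_top _) (mem_top _)⟩
  obtain ⟨k, hk⟩ := Nat.dvd_factorial Nat.card_pos hcard
  have hc : c ^ (schurBound (n ^ 2)).factorial = 1 := by
    rw [hk, pow_mul, pow_card_eq_one', one_pow]
  simpa [c, commutatorElement_def] using
    congrArg (fun g : commutator (closure s) => ((g : closure s) : G)) hc

lemma commutatorElement_pow_eq_one_of_mem_closure {A : Subgroup G} [A.Normal]
    (hA : ∀ a ∈ A, ∀ b ∈ A, Commute a b) {y : G} (hy : y ∈ A) {e : ℕ} {S : Set G}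
    (hS : ∀ s ∈ S, ⁅s, y⁆ ^ e = 1) {g : G} (hg : g ∈ closure S) : ⁅g, y⁆ ^ e = 1 := by
  have hmem : ∀ g, ⁅g, y⁆ ∈ A := fun g =>
    mul_mem (Normal.conj_mem inferInstance y hy g) (inv_mem hy)
  induction hg using closure_induction with
  | mem s hs => exact hS s hs
  | one => simp
  | mul a b _ _ ha hb =>
    have hcocycle : ⁅a * b, y⁆ = a * ⁅b, y⁆ * a⁻¹ * ⁅a, y⁆ := by
      simp only [commutatorElement_def]; group
    rw [hcocycle, (hA _ (Normal.conj_mem inferInstance _ (hmem b) a) _ (hmem a)).mul_pow,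
      conj_pow, hb, ha]
    group
  | inv a _ ha =>
    have hcocycle : ⁅a⁻¹, y⁆ = a⁻¹ * ⁅a, y⁆⁻¹ * a⁻¹⁻¹ := by
      simp only [commutatorElement_def]; group
    rw [hcocycle, conj_pow, inv_pow, ha]
    group

lemma commute_of_mem_map_mk {T : Subgroup G} [T.Normal] {a b : G ⧸ ⁅T, T⁆}
    (ha : a ∈ T.map (QuotientGroup.mk' ⁅T, T⁆)) (hb : b ∈ T.map (QuotientGroup.mk' ⁅T, T⁆)) :
    Commute a b := by
  obtain ⟨a, ha, rfl⟩ := ha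
  obtain ⟨b, hb, rfl⟩ := hb
  rw [← commutatorElement_eq_one_iff_commute, ← map_commutatorElement, QuotientGroup.mk'_apply,
    QuotientGroup.eq_one_iff]
  exact commutator_mem_commutator ha hb

lemma card_closure_le_pow_of_commute {s : Set G} [Finite s]
    (hcomm : ∀ a ∈ s, ∀ b ∈ s, Commute a b) {e k : ℕ} (he : 0 < e) (hs : Nat.card s ≤ k)
    (hexp : ∀ a ∈ s, a ^ e = 1) :
    Finite (closure s) ∧ Nat.card (closure s) ≤ e ^ k := by
  have := isMulCommutative_closure hcomm
  have hpow : ∀ g : closure s, g ^ e = 1 := by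
    have hle : closure (((↑) : closure s → G) ⁻¹' s) ≤ (powMonoidHom e).ker :=
      (closure_le _).mpr fun g hg => Subtype.ext (hexp g hg)
    rw [closure_closure_coe_preimage] at hle
    exact fun g => hle (mem_top g)
  have : Group.FG (closure s) := Group.closure_finite_fg s
  have hdvd := card_dvd_exponent_pow_rank' (closure s) hpow
  have hrank : Group.rank (closure s) ≤ k := (rank_closure_finite_le_nat_card s).trans hs
  have hne : e ^ Group.rank (closure s) ≠ 0 := by positivity
  exact ⟨Nat.finite_of_card_ne_zero (ne_zero_of_dvd_ne_zero hne hdvd),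
    (Nat.le_of_dvd (by positivity) hdvd).trans (Nat.pow_le_pow_right he hrank)⟩

lemma finite_and_card_le_of_map_le_of_ker_le {P : Type*} [Group P] (f : G →* P)
    {N K : Subgroup G} {B : Subgroup P} [Finite B] [Finite K] (hB : N.map f ≤ B)
    (hK : f.ker ≤ K) : Finite N ∧ Nat.card N ≤ Nat.card B * Nat.card K := by
  have hcard : Nat.card N = Nat.card (N.map f) * Nat.card (f.ker.subgroupOf N) := by
    rw [← (f.domRestrict N).ker.card_mul_index, index_ker, MonoidHom.ker_domRestrict,
      MonoidHom.domRestrict_range, mul_comm]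
  have : Finite (N.map f) := Finite.of_injective _ (inclusion_injective hB)
  let ι : f.ker.subgroupOf N → K := fun u => ⟨u.1, hK u.2⟩
  have hι : Function.Injective ι := fun u v huv =>
    Subtype.ext (Subtype.ext (by simpa [ι] using congrArg Subtype.val huv))
  have : Finite (f.ker.subgroupOf N) := Finite.of_injective ι hι
  have hker : Nat.card (f.ker.subgroupOf N) ≤ Nat.card K := Nat.card_le_card_of_injective ι hι
  refine ⟨Nat.finite_of_card_ne_zero ?_, hcard ▸ Nat.mul_le_mul (card_le_of_le hB) hker⟩
  rw [hcard]
  exact (Nat.mul_pos Nat.card_pos Nat.card_pos).ne'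

end Commutators

section BoundedConjugacyClasses

variable {G : Type*} [Group G]

lemma conjClass_subset_of_conj_mem {X : Set G} (hX : ∀ g : G, ∀ x ∈ X, g⁻¹ * x * g ∈ X)
    {x : G} (hx : x ∈ X) : conjClass x ⊆ X := by
  rintro _ ⟨g, rfl⟩
  exact hX g x hx

lemma conjClass_subset_of_mem {T : Subgroup G} [T.Normal] {x : G} (hx : x ∈ T) :
    conjClass x ⊆ T := by
  rintro _ ⟨g, rfl⟩
  simpa using Normal.conj_mem inferInstance x hx g⁻¹

lemma image2_commutatorElement_conjClass_subset (S : Set G) (y : G) :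
    Set.image2 (⁅·, ·⁆) S (conjClass y) ⊆
      Function.uncurry (fun a b => a * b⁻¹) '' (conjClass y ×ˢ conjClass y) := by
  rintro _ ⟨k, -, z, hz, rfl⟩
  refine ⟨(k * z * k⁻¹, z), ⟨?_, hz⟩, by simp [commutatorElement_def]⟩
  rw [mem_conjClass_iff] at hz ⊢
  exact hz.trans (isConj_iff.mpr ⟨k, rfl⟩)

lemma image2_commutatorElement_conjClass_finite_and_ncard_le (S : Set G) {y : G}
    (hy : (conjClass y).Finite) :
    (Set.image2 (⁅·, ·⁆) S (conjClass y)).Finite ∧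
      (Set.image2 (⁅·, ·⁆) S (conjClass y)).ncard ≤ (conjClass y).ncard ^ 2 := by
  have hsub := image2_commutatorElement_conjClass_subset S y
  have hfin := (hy.prod hy).image (Function.uncurry fun a b : G => a * b⁻¹)
  refine ⟨hfin.subset hsub, (Set.ncard_le_ncard hsub hfin).trans ?_⟩
  exact (Set.ncard_image_le (hy.prod hy)).trans (by rw [Set.ncard_prod, sq])

lemma normalClosure_commSub_le (H : Subgroup G) [H.Normal] (x : G) :
    normalClosure (commSub H x : Set G) ≤
      closure (Set.image2 (⁅·, ·⁆) (H : Set G) (conjClass x⁻¹)) := by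
  rw [commSub, normalClosure_closure_eq_normalClosure]
  refine closure_mono fun w hw => ?_
  obtain ⟨_, ⟨h, hh, rfl⟩, hc⟩ := Group.mem_conjugatesOfSet_iff.mp hw
  obtain ⟨c, rfl⟩ := isConj_iff.mp hc
  refine ⟨c * h⁻¹ * c⁻¹, Normal.conj_mem inferInstance _ (inv_mem hh) c, c * x⁻¹ * c⁻¹,
    mem_conjClass_iff.mpr (isConj_iff.mpr ⟨c, rfl⟩), ?_⟩
  simp only [commutatorElement_def]
  group

lemma card_commutator_normalClosure_le {y : G} {n : ℕ} (hy : (conjClass y).Finite)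
    (hyn : (conjClass y).ncard ≤ n) :
    Finite (⁅normalClosure {y}, normalClosure {y}⁆ : Subgroup G) ∧
      Nat.card (⁅normalClosure {y}, normalClosure {y}⁆ : Subgroup G) ≤ schurBound (n ^ n) := by
  rw [← closure_conjClass, ← map_subtype_commutator]
  obtain ⟨_, hcard⟩ := card_commutator_closure_le hy ⟨y, mem_conjClass_iff.mpr (IsConj.refl y)⟩
    (fun z hz => by rw [conjClass_eq_of_mem hz]; exact ⟨hy, hyn⟩) hyn
  refine ⟨Finite.of_equiv _ (equivMapOfInjective _ _ (subtype_injective _)).toEquiv,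
    (card_map_of_injective (subtype_injective _)).trans_le hcard⟩

lemma mk_commutatorElement_pow_eq_one {X : Set G} {n : ℕ}
    (hcls : ∀ x ∈ X, (conjClass x).Finite ∧ (conjClass x).ncard ≤ n)
    (T : Subgroup G) [T.Normal] {k z : G} (hk : k ∈ closure X) (hzX : z ∈ X) (hzT : z ∈ T) :
    QuotientGroup.mk' ⁅T, T⁆ ⁅k, z⁆ ^ (schurBound (n ^ 2)).factorial = 1 := by
  set π := QuotientGroup.mk' ⁅T, T⁆
  have := ‹T.Normal›.map π (QuotientGroup.mk'_surjective _)
  rw [map_commutatorElement]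
  refine commutatorElement_pow_eq_one_of_mem_closure (A := T.map π)
    (fun a ha b hb => commute_of_mem_map_mk ha hb) (mem_map_of_mem π hzT) (S := π '' X) ?_ ?_
  · rintro _ ⟨s, hs, rfl⟩
    rw [← map_commutatorElement, ← map_pow,
      commutatorElement_pow_factorial_eq_one (hcls s hs) (hcls z hzX), map_one]
  · rw [← MonoidHom.map_closure]
    exact mem_map_of_mem π hk

lemma finite_closure_image_mk_and_card_le {X : Set G} {n : ℕ}
    (hX : ∀ g : G, ∀ x ∈ X, g⁻¹ * x * g ∈ X)
    (hcls : ∀ x ∈ X, (conjClass x).Finite ∧ (conjClass x).ncard ≤ n) {y : G} (hy : y ∈ X)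
    (T : Subgroup G) [T.Normal] (hyT : y ∈ T) :
    Finite (closure (QuotientGroup.mk' ⁅T, T⁆ '' Set.image2 (⁅·, ·⁆) (closure X : Set G)
        (conjClass y))) ∧
      Nat.card (closure (QuotientGroup.mk' ⁅T, T⁆ '' Set.image2 (⁅·, ·⁆) (closure X : Set G)
        (conjClass y))) ≤ (schurBound (n ^ 2)).factorial ^ (n ^ 2) := by
  obtain ⟨hWfin, hWcard⟩ :=
    image2_commutatorElement_conjClass_finite_and_ncard_le (closure X : Set G) (hcls y hy).1
  have := (hWfin.image (QuotientGroup.mk' ⁅T, T⁆)).to_subtype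
  refine card_closure_le_pow_of_commute ?_ (Nat.factorial_pos _) ?_ ?_
  · rintro _ ⟨_, ⟨a, -, z, hz, rfl⟩, rfl⟩ _ ⟨_, ⟨b, -, w, hw, rfl⟩, rfl⟩
    exact commute_of_mem_map_mk
      (mem_map_of_mem _ (commutator_le_right ⊤ T
        (commutator_mem_commutator (mem_top a) (conjClass_subset_of_mem hyT hz))))
      (mem_map_of_mem _ (commutator_le_right ⊤ T
        (commutator_mem_commutator (mem_top b) (conjClass_subset_of_mem hyT hw))))
  · exact (Nat.card_image_le hWfin).trans (hWcard.trans (Nat.pow_le_pow_left (hcls y hy).2 2))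
  · rintro _ ⟨_, ⟨k, hk, z, hz, rfl⟩, rfl⟩
    exact mk_commutatorElement_pow_eq_one hcls T hk (conjClass_subset_of_conj_mem hX hy hz)
      (conjClass_subset_of_mem hyT hz)

end BoundedConjugacyClasses

/-- Lemma 2.3: if `X` is a normal symmetric subset of `G` with `|x^G| ≤ n` for every
`x ∈ X` and `H = ⟨X⟩`, then for each `x ∈ X` the normal closure `⟨[H,x]^G⟩` is finite
of `n`-bounded order. -/
theorem normalClosure_commSub_finite_of_bounded_classes :
    ∃ f : ℕ → ℕ, ∀ (n : ℕ) (G : Type) (_ : Group G) (X : Set G),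
      X⁻¹ = X → (∀ g : G, ∀ x ∈ X, g⁻¹ * x * g ∈ X) →
      (∀ x ∈ X, (conjClass x).Finite ∧ (conjClass x).ncard ≤ n) →
      ∀ x ∈ X,
        Finite (Subgroup.normalClosure ((commSub (Subgroup.closure X) x : Subgroup G) : Set G)) ∧
          Nat.card (Subgroup.normalClosure ((commSub (Subgroup.closure X) x : Subgroup G) : Set G))
            ≤ f n := by
  refine ⟨fun n => (schurBound (n ^ 2)).factorial ^ (n ^ 2) * schurBound (n ^ n), ?_⟩
  intro n G _ X hsym hnorm hcls x hx
  have hx' : x⁻¹ ∈ X := hsym ▸ Set.inv_mem_inv.mpr hx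
  have := closure_normal_of_conj_mem hnorm
  set T := normalClosure {x⁻¹}
  obtain ⟨_, hBcard⟩ :=
    finite_closure_image_mk_and_card_le hnorm hcls hx' T (subset_normalClosure rfl)
  obtain ⟨_, hKcard⟩ := card_commutator_normalClosure_le (hcls _ hx').1 (hcls _ hx').2
  have hmap : (normalClosure (commSub (closure X) x : Set G)).map (QuotientGroup.mk' ⁅T, T⁆) ≤
      closure (QuotientGroup.mk' ⁅T, T⁆ '' Set.image2 (⁅·, ·⁆) (closure X : Set G)
        (conjClass x⁻¹)) := by
    rw [← MonoidHom.map_closure]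
    exact map_mono (normalClosure_commSub_le _ x)
  obtain ⟨hN, hNcard⟩ := finite_and_card_le_of_map_le_of_ker_le _ hmap (QuotientGroup.ker_mk' _).le
  exact ⟨hN, hNcard.trans (Nat.mul_le_mul hBcard hKcard)⟩
end

section
/- Let G be a group and x, y ∈ G with |x^G| = m and |(yx)^G| ≤ m. Suppose there exist b₁, …, b_m ∈ G such that x^G = {x^{b₁}, …, x^{b_m}} and y centralizes each b_i. Then [G, y] ≤ [G, x]. -/
/-- The subgroup `[G, x]` generated by the commutators `[g, x]` with `g ∈ G`. -/
def commSubFull {G : Type*} [Group G] (x : G) : Subgroup G :=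
  Subgroup.closure {z | ∃ g : G, z = g⁻¹ * x⁻¹ * g * x}

section

variable {G : Type*} [Group G]

theorem commSubFull_normal (x : G) : (commSubFull x).Normal where
  conj_mem n hn h := by
    suffices commSubFull x ≤ (commSubFull x).comap (MulAut.conj h).toMonoidHom from this hn
    refine (Subgroup.closure_le _).2 ?_
    rintro _ ⟨g, rfl⟩
    have hconj : h * (g⁻¹ * x⁻¹ * g * x) * h⁻¹ =
        ((g * h⁻¹)⁻¹ * x⁻¹ * (g * h⁻¹) * x) * (h * x⁻¹ * h⁻¹ * x)⁻¹ := by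
      group
    simp only [SetLike.mem_coe, Subgroup.mem_comap, MulEquiv.coe_toMonoidHom, MulAut.conj_apply,
      hconj]
    exact mul_mem (Subgroup.subset_closure ⟨g * h⁻¹, rfl⟩)
      (inv_mem (Subgroup.subset_closure ⟨h⁻¹, by group⟩))

theorem mul_mem_conjClass_mul {x y c : G} (hyc : Commute y c) :
    y * (c⁻¹ * x * c) ∈ conjClass (y * x) :=
  ⟨c, by simp only [mul_assoc]; rw [← mul_assoc y c⁻¹, hyc.inv_right.eq, mul_assoc]⟩

theorem conjClass_mul_eq_image {x y : G} (hyx : (conjClass (y * x)).Finite)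
    (hcard : (conjClass (y * x)).ncard ≤ (conjClass x).ncard)
    (hsub : (y * ·) '' conjClass x ⊆ conjClass (y * x)) :
    conjClass (y * x) = (y * ·) '' conjClass x :=
  (Set.eq_of_subset_of_ncard_le hsub
    (by rwa [Set.ncard_image_of_injective _ (mul_right_injective y)]) hyx).symm

theorem commSubFull_le_of_conjClass_mul_subset {x y : G}
    (h : conjClass (y * x) ⊆ (y * ·) '' conjClass x) : commSubFull y ≤ commSubFull x := by
  refine (Subgroup.closure_le _).2 ?_
  rintro _ ⟨g, rfl⟩
  obtain ⟨_, ⟨c, rfl⟩, hc⟩ := h ⟨g, rfl⟩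
  have hcomm : g⁻¹ * y⁻¹ * g * y =
      x * ((g⁻¹ * x⁻¹ * g * x)⁻¹ * (c⁻¹ * x⁻¹ * c * x)) * x⁻¹ := by
    calc g⁻¹ * y⁻¹ * g * y = (g⁻¹ * x * g) * ((g⁻¹ * (y * x) * g)⁻¹ * (y * x)) * x⁻¹ := by
          group
      _ = _ := by rw [← hc]; group
  rw [SetLike.mem_coe, hcomm]
  exact (commSubFull_normal x).conj_mem _ (mul_mem (inv_mem (Subgroup.subset_closure ⟨g, rfl⟩))
    (Subgroup.subset_closure ⟨c, rfl⟩)) x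

end

theorem commSubFull_le_commSubFull_general
    {G : Type*} [Group G] (x y : G) (m : ℕ)
    (hx : (conjClass x).Finite ∧ (conjClass x).ncard = m)
    (hyx : (conjClass (y * x)).Finite ∧ (conjClass (y * x)).ncard ≤ m)
    (b : Fin m → G)
    (hb : conjClass x = Set.range (fun i => (b i)⁻¹ * x * (b i)))
    (hyb : ∀ i, y * b i = b i * y) :
    commSubFull y ≤ commSubFull x := by
  have hsub : (y * ·) '' conjClass x ⊆ conjClass (y * x) := by
    rw [hb, ← Set.range_comp]
    rintro _ ⟨i, rfl⟩
    exact mul_mem_conjClass_mul (hyb i)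
  exact commSubFull_le_of_conjClass_mul_subset
    (conjClass_mul_eq_image hyx.1 (hx.2 ▸ hyx.2) hsub).subset

/-- Lemma 2.4: if `|x^G| = m`, `|(yx)^G| ≤ m`, `x^G = {x^{b₁},…,x^{b_m}}` and `y`
centralizes `b₁,…,b_m`, then `[G, y] ≤ [G, x]`. -/
theorem commSubFull_le_commSubFull
    {G : Type*} [Group G] (x y : G) (m : ℕ) (hm : 1 ≤ m)
    (hx : (conjClass x).Finite ∧ (conjClass x).ncard = m)
    (hyx : (conjClass (y * x)).Finite ∧ (conjClass (y * x)).ncard ≤ m)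
    (b : Fin m → G)
    (hb : conjClass x = Set.range (fun i => (b i)⁻¹ * x * (b i)))
    (hyb : ∀ i, y * b i = b i * y) :
    commSubFull y ≤ commSubFull x :=
  commSubFull_le_commSubFull_general x y m hx hyx b hb hyb
end

section
/- Under the hypotheses of the previous lemma (|x^G| = m, |(yx)^G| ≤ m, x^G = {x^{b₁},…,x^{b_m}}, and y ∈ C_G(b₁,…,b_m)), the conjugacy class of yx equals {yx^{b₁}, …, yx^{b_m}}. -/
theorem Commute.mul_conj_mem_conjClass_mul {G : Type*} [Group G] {x y g : G} (h : Commute y g) :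
    y * (g⁻¹ * x * g) ∈ conjClass (y * x) :=
  ⟨g, by rw [← mul_assoc, ← mul_assoc, h.inv_right.eq, mul_assoc _ y]⟩

theorem conjClass_mul_eq_general
    {G : Type*} [Group G] (x y : G) (m : ℕ)
    (hx : (conjClass x).Finite ∧ (conjClass x).ncard = m)
    (hyx : (conjClass (y * x)).Finite ∧ (conjClass (y * x)).ncard ≤ m)
    (b : Fin m → G)
    (hb : conjClass x = Set.range (fun i => (b i)⁻¹ * x * (b i)))
    (hyb : ∀ i, y * b i = b i * y) :
    conjClass (y * x) = Set.range (fun i => y * ((b i)⁻¹ * x * (b i))) := by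
  have hsub : Set.range (fun i => y * ((b i)⁻¹ * x * (b i))) ⊆ conjClass (y * x) :=
    Set.range_subset_iff.2 fun i => Commute.mul_conj_mem_conjClass_mul (hyb i)
  have himage : Set.range (fun i => y * ((b i)⁻¹ * x * (b i))) = (y * ·) '' conjClass x := by
    rw [hb, ← Set.range_comp]
    rfl
  have hcard : (Set.range (fun i => y * ((b i)⁻¹ * x * (b i)))).ncard = m := by
    rw [himage, Set.ncard_image_of_injective _ (mul_right_injective y), hx.2]
  exact (Set.eq_of_subset_of_ncard_le hsub (hcard.symm ▸ hyx.2) hyx.1).symm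

/-- Under the hypotheses of Lemma 2.4, the conjugacy class of `yx` is exactly
`{yx^{b₁}, …, yx^{b_m}}`. -/
theorem conjClass_mul_eq
    {G : Type*} [Group G] (x y : G) (m : ℕ) (hm : 1 ≤ m)
    (hx : (conjClass x).Finite ∧ (conjClass x).ncard = m)
    (hyx : (conjClass (y * x)).Finite ∧ (conjClass (y * x)).ncard ≤ m)
    (b : Fin m → G)
    (hb : conjClass x = Set.range (fun i => (b i)⁻¹ * x * (b i)))
    (hyb : ∀ i, y * b i = b i * y) :
    conjClass (y * x) = Set.range (fun i => y * ((b i)⁻¹ * x * (b i))) :=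
  conjClass_mul_eq_general x y m hx hyx b hb hyb
end

section
/- Let G be a group whose center Z(G) has finite index k. Then the commutator subgroup G' is finite, of order bounded in terms of k. -/
/-!
A commutator `⁅a, b⁆` depends only on the cosets of `a` and `b` modulo `Z(G)`, so a group whose
centre has index `k` has at most `k²` commutators. Schur's bound in terms of the number `n` of
commutators, `|G'| ∣ k ^ (k * n + 1)` (proved in Mathlib via the transfer `G → Z(G)` and
Schreier's lemma), then gives `|G'| ≤ k ^ (k ^ 3 + 1)`.
-/

open scoped commutatorElement

namespace Subgroup

variable {G : Type*} [Group G]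

theorem commutatorElement_mul_mem_center {a b z w : G} (hz : z ∈ center G) (hw : w ∈ center G) :
    ⁅a * z, b * w⁆ = ⁅a, b⁆ := by
  rw [mem_center_iff] at hz hw
  calc ⁅a * z, b * w⁆ = a * (b * w) * (z * z⁻¹) * a⁻¹ * w⁻¹ * b⁻¹ := by
        rw [commutatorElement_def, mul_inv_rev, mul_inv_rev, mul_assoc a z, ← hz]; group
    _ = a * b * (w * a⁻¹) * w⁻¹ * b⁻¹ := by group
    _ = ⁅a, b⁆ := by rw [← hw a⁻¹, commutatorElement_def]; group

theorem commutatorSet_eq_range_out :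
    commutatorSet G =
      Set.range fun p : (G ⧸ center G) × (G ⧸ center G) => ⁅p.1.out, p.2.out⁆ := by
  refine subset_antisymm ?_ (Set.range_subset_iff.mpr fun _ => commutator_mem_commutatorSet _ _)
  rintro _ ⟨a, b, rfl⟩
  obtain ⟨z, hz⟩ := QuotientGroup.mk_out_eq_mul (center G) a
  obtain ⟨w, hw⟩ := QuotientGroup.mk_out_eq_mul (center G) b
  exact ⟨(a, b), by simp only [hz, hw, commutatorElement_mul_mem_center z.2 w.2]⟩

variable [FiniteIndex (center G)]

instance finite_commutatorSet_of_finiteIndex_center : Finite (commutatorSet G) := by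
  rw [commutatorSet_eq_range_out]
  infer_instance

theorem card_commutatorSet_le_index_center_sq :
    Nat.card (commutatorSet G) ≤ (center G).index ^ 2 := by
  rw [commutatorSet_eq_range_out, index_eq_card, sq, ← Nat.card_prod]
  exact Finite.card_range_le _

theorem card_commutator_le_index_center_pow :
    Nat.card (_root_.commutator G) ≤ (center G).index ^ ((center G).index ^ 3 + 1) := by
  have hk : 0 < (center G).index := Nat.pos_of_ne_zero FiniteIndex.index_ne_zero
  refine Nat.le_of_dvd (pow_pos hk _) ((card_commutator_dvd_index_center_pow G).trans ?_)
  refine pow_dvd_pow _ (Nat.add_le_add_right ?_ 1)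
  calc (center G).index * Nat.card (commutatorSet G)
      ≤ (center G).index * (center G).index ^ 2 :=
        Nat.mul_le_mul_left _ card_commutatorSet_le_index_center_sq
    _ = (center G).index ^ 3 := by ring

end Subgroup

/-- Schur's theorem: if the center of `G` has finite index `k`, then the commutator
subgroup `G'` is finite of `k`-bounded order. -/
theorem schur_theorem :
    ∃ f : ℕ → ℕ, ∀ (k : ℕ), k ≠ 0 → ∀ (G : Type) (_ : Group G),
      (Subgroup.center G).index = k →
      Finite ↥(commutator G) ∧ Nat.card ↥(commutator G) ≤ f k := by
  refine ⟨fun k => k ^ (k ^ 3 + 1), fun k hk G _ h => ?_⟩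
  have : (Subgroup.center G).FiniteIndex := ⟨h ▸ hk⟩
  subst h
  exact ⟨inferInstance, Subgroup.card_commutator_le_index_center_pow⟩
end

section
/- Let K, n be positive integers, G a group, and A a K-approximate subgroup of G with |[g,a]^G| ≤ n for all g ∈ G and a ∈ A. Let E = {e₁,…,e_K} with AA ⊆ EA, and suppose [G,E] ≤ Z(H), where H is the subgroup generated by all G-conjugates of commutators [g,a] (g ∈ G, a ∈ A). Let m be the maximal index of C_H(x) in H over x in this generating set. Then for every b ∈ ⟨A⟩ and g ∈ G, the H-conjugacy class of [g,b] has size at most m. -/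
/-!
Since `⟨E⟩A` is stable under right multiplication by `A = A⁻¹`, every `b ∈ ⟨A⟩` is `e * a` with
`e ∈ ⟨E⟩` and `a ∈ A`. Then `[g, e a] = [g, a] * a⁻¹ [g, e] a`, where `[g, a]`
lies in the generating set `X` of `H` and `a⁻¹ [g, e] a` is central in `H`, because `[G, E]` is
central in `H` and both `H` and its centralizer are normal in `G`. Multiplying by an element
centralising `H` translates the `H`-conjugacy class bijectively, so the class of `[g, b]` has the
size of the class of `[g, a]`, which is at most `m`.
-/

open Pointwise

def conjClassIn {G : Type*} [Group G] (H : Subgroup G) (x : G) : Set G :=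
  {y | ∃ h ∈ H, y = h⁻¹ * x * h}

namespace Subgroup

variable {G : Type*} [Group G]

theorem closure_normal_of_conj_mem {X : Set G} (hX : ∀ x ∈ X, ∀ f : G, f * x * f⁻¹ ∈ X) :
    (closure X).Normal := by
  have hconj : Group.conjugatesOfSet X = X := by
    refine subset_antisymm (fun y hy => ?_) Group.subset_conjugatesOfSet
    obtain ⟨x, hx, hxy⟩ := Group.mem_conjugatesOfSet_iff.1 hy
    obtain ⟨f, rfl⟩ := isConj_iff.1 hxy
    exact hX x hx f
  rw [← hconj]
  exact normalClosure_normal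

theorem mk_mem_center_iff {N : Subgroup G} [N.Normal] {e : G} :
    (e : G ⧸ N) ∈ center (G ⧸ N) ↔ ∀ g : G, g⁻¹ * e⁻¹ * g * e ∈ N := by
  rw [mem_center_iff, QuotientGroup.mk_surjective.forall]
  refine forall_congr' fun g => ?_
  rw [eq_comm, ← QuotientGroup.mk_mul, ← QuotientGroup.mk_mul, QuotientGroup.eq, mul_inv_rev,
    ← mul_assoc]

/-- The elements that are central modulo `N` form a subgroup, the preimage of `Z(G ⧸ N)`. -/
theorem commutator_mem_of_mem_closure {N : Subgroup G} [N.Normal] {S : Set G}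
    (hS : ∀ g : G, ∀ e ∈ S, g⁻¹ * e⁻¹ * g * e ∈ N) {e : G} (he : e ∈ closure S) (g : G) :
    g⁻¹ * e⁻¹ * g * e ∈ N := by
  have hle : closure S ≤ (center (G ⧸ N)).comap (QuotientGroup.mk' N) :=
    closure_le _ |>.2 fun e he => mk_mem_center_iff.2 fun g => hS g e he
  exact mk_mem_center_iff.1 (hle he) g

theorem coe_closure_subset_closure_mul_of_mul_subset {A E : Set G} (hA : A.Nonempty)
    (hsym : A⁻¹ = A) (hEA : A * A ⊆ E * A) : (closure A : Set G) ⊆ closure E * A := by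
  have hstep : (closure E : Set G) * A * A ⊆ closure E * A :=
    calc (closure E : Set G) * A * A = closure E * (A * A) := mul_assoc _ _ _
      _ ⊆ closure E * (E * A) := Set.mul_subset_mul_left hEA
      _ = closure E * E * A := (mul_assoc _ _ _).symm
      _ ⊆ closure E * A := Set.mul_subset_mul_right (mul_subset subset_rfl subset_closure)
  intro b hb
  induction hb using closure_induction_right with
  | one =>
    obtain ⟨a, ha⟩ := hA
    have h1 : (1 : G) ∈ E * A :=
      inv_mul_cancel a ▸ hEA (Set.mul_mem_mul (hsym ▸ Set.inv_mem_inv.2 ha) ha)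
    exact Set.mul_subset_mul_right subset_closure h1
  | mul_right x _ y hy ih => exact hstep (Set.mul_mem_mul ih hy)
  | mul_inv_cancel x _ y hy ih =>
    exact hstep (Set.mul_mem_mul ih (hsym ▸ Set.inv_mem_inv.2 hy))

end Subgroup

theorem conjClassIn_mul_of_mem_centralizer {G : Type*} [Group G] {H : Subgroup G} {x z : G}
    (hz : z ∈ Subgroup.centralizer (H : Set G)) :
    conjClassIn H (x * z) = (· * z) '' conjClassIn H x := by
  have hconj : ∀ h ∈ H, h⁻¹ * x * h * z = h⁻¹ * (x * z) * h := fun h hh => by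
    simp only [mul_assoc, Subgroup.mem_centralizer_iff.1 hz h hh]
  ext y
  constructor
  · rintro ⟨h, hh, rfl⟩
    exact ⟨_, ⟨h, hh, rfl⟩, hconj h hh⟩
  · rintro ⟨_, ⟨h, hh, rfl⟩, rfl⟩
    exact ⟨h, hh, hconj h hh⟩

theorem conjClassIn_comm_le_general
    (m : ℕ)
    (G : Type*) [Group G] (A : Set G) (hsym : A⁻¹ = A)
    (E : Finset G) (hEA : A * A ⊆ (E : Set G) * A)
    (X : Set G) (hX : X = {z | ∃ b g : G, ∃ a ∈ A, z = b⁻¹ * (g⁻¹ * a⁻¹ * g * a) * b})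
    (H : Subgroup G) (hH : H = Subgroup.closure X)
    (hGE : Subgroup.closure {z : G | ∃ g : G, ∃ e ∈ E, z = g⁻¹ * e⁻¹ * g * e} ≤
      H ⊓ Subgroup.centralizer (H : Set G))
    (hm : ∀ x ∈ X, (conjClassIn H x).Finite ∧ (conjClassIn H x).ncard ≤ m)
    (hmax : ∃ x ∈ X, (conjClassIn H x).ncard = m) :
    ∀ b ∈ Subgroup.closure A, ∀ g : G,
      (conjClassIn H (g⁻¹ * b⁻¹ * g * b)).Finite ∧
        (conjClassIn H (g⁻¹ * b⁻¹ * g * b)).ncard ≤ m := by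
  subst hH
  have : (Subgroup.closure X).Normal := Subgroup.closure_normal_of_conj_mem fun x hx f => by
    obtain ⟨b, g, a, ha, rfl⟩ := hX ▸ hx
    exact hX ▸ ⟨b * f⁻¹, g, a, ha, by group⟩
  have hA : A.Nonempty := by
    obtain ⟨x, hx, -⟩ := hmax
    obtain ⟨-, -, a, ha, -⟩ := hX ▸ hx
    exact ⟨a, ha⟩
  intro b hb g
  obtain ⟨e, he, a, ha, rfl⟩ :=
    Subgroup.coe_closure_subset_closure_mul_of_mul_subset hA hsym hEA hb
  have hcomm_e := Subgroup.commutator_mem_of_mem_closure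
    (fun g e he => hGE (Subgroup.subset_closure ⟨g, e, he, rfl⟩)) he g
  have hz := (Subgroup.Normal.conj_mem' inferInstance _ hcomm_e a).2
  have hsplit : g⁻¹ * (e * a)⁻¹ * g * (e * a) =
      (g⁻¹ * a⁻¹ * g * a) * (a⁻¹ * (g⁻¹ * e⁻¹ * g * e) * a) := by group
  have hcomm_a : g⁻¹ * a⁻¹ * g * a ∈ X := hX ▸ ⟨1, g, a, ha, by group⟩
  obtain ⟨hfin, hcard⟩ := hm _ hcomm_a
  rw [hsplit, conjClassIn_mul_of_mem_centralizer hz]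
  exact ⟨hfin.image _, (Set.ncard_image_of_injective _ (mul_left_injective _)).trans_le hcard⟩

/-- Lemma 4.2: under `[G, E] ≤ Z(H)`, for every `b ∈ ⟨A⟩` and `g ∈ G` the
`H`-conjugacy class of `[g, b]` has size at most `m`. -/
theorem conjClassIn_comm_le
    (K n m : ℕ) (hK : 0 < K) (hn : 0 < n)
    (G : Type*) [Group G] (A : Set G) (hsym : A⁻¹ = A)
    (E : Finset G) (hE : E.card ≤ K) (hEA : A * A ⊆ (E : Set G) * A)
    (hclass : ∀ (g : G), ∀ a ∈ A, (conjClass (g⁻¹ * a⁻¹ * g * a)).Finite ∧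
      (conjClass (g⁻¹ * a⁻¹ * g * a)).ncard ≤ n)
    (X : Set G) (hX : X = {z | ∃ b g : G, ∃ a ∈ A, z = b⁻¹ * (g⁻¹ * a⁻¹ * g * a) * b})
    (H : Subgroup G) (hH : H = Subgroup.closure X)
    (hGE : Subgroup.closure {z : G | ∃ g : G, ∃ e ∈ E, z = g⁻¹ * e⁻¹ * g * e} ≤
      H ⊓ Subgroup.centralizer (H : Set G))
    (hm : ∀ x ∈ X, (conjClassIn H x).Finite ∧ (conjClassIn H x).ncard ≤ m)
    (hmax : ∃ x ∈ X, (conjClassIn H x).ncard = m) :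
    ∀ b ∈ Subgroup.closure A, ∀ g : G,
      (conjClassIn H (g⁻¹ * b⁻¹ * g * b)).Finite ∧
        (conjClassIn H (g⁻¹ * b⁻¹ * g * b)).ncard ≤ m :=
  conjClassIn_comm_le_general m G A hsym E hEA X hX H hH hGE hm hmax
end
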